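/- There exist orthogonal projections P, Q, P', Q' on the Hilbert space ℂ³ and a unit vector φ ∈ ℂ³ such that, setting v(R) = ⟨φ, Rφ⟩ for each orthogonal projection R, one has v(P) = v(P') and v(Q) = v(Q'), but v(P ∨ Q) ≠ v(P' ∨ Q'). Hence the valuation induced by a quantum state is, in general, not static: equal truth values on the components do not force equal truth values on the compound formulas. -/

import Mathlib

noncomputable section
open scoped ComplexInnerProductSpace

abbrev H3 : Type := EuclideanSpace ℂ (Fin 3)

/-- An orthogonal projection: an idempotent, self-adjoint bounded operator. -/
def IsOrthoProj (P : H3 →L[ℂ] H3) : Prop := IsIdempotentElem P ∧ IsSelfAdjoint P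

/-- The range of a bounded operator, as a submodule. -/
def rng (P : H3 →L[ℂ] H3) : Submodule ℂ H3 := LinearMap.range (P : H3 →ₗ[ℂ] H3)

/-- Orthogonal projection onto a subspace, as an operator. -/
def sproj (K : Submodule ℂ H3) : H3 →L[ℂ] H3 := K.subtypeL.comp K.orthogonalProjection

/-- The lattice join of two projections: projection onto the sum of the ranges. -/
def Pjoin (P Q : H3 →L[ℂ] H3) : H3 →L[ℂ] H3 := sproj (rng P ⊔ rng Q)

lemma sproj_apply_mem (K : Submodule ℂ H3) (x : H3) (hx : x ∈ K) : sproj K x = x := by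
  have h := Submodule.orthogonalProjectionOnto_mem_subspace_eq_self (K := K) ⟨x, hx⟩
  simpa [sproj] using congrArg Subtype.val h

lemma sproj_isOrtho (K : Submodule ℂ H3) : IsOrthoProj (sproj K) := by
  refine ⟨?_, isSelfAdjoint_starProjection K⟩
  refine ContinuousLinearMap.ext fun x => ?_
  rw [ContinuousLinearMap.mul_apply]
  exact sproj_apply_mem K (sproj K x) (by simp [sproj])

lemma rng_sproj (K : Submodule ℂ H3) : rng (sproj K) = K := by
  apply le_antisymm
  · rintro x ⟨y, rfl⟩
    simp [sproj, rng]
  · intro x hx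
    exact ⟨x, sproj_apply_mem K x hx⟩

lemma sproj_singleton (u φ : H3) :
    sproj (ℂ ∙ u) φ = (⟪u, φ⟫ / ⟪u, u⟫) • u := by
  simp only [sproj, ContinuousLinearMap.comp_apply, Submodule.subtypeL_apply]
  rw [← Submodule.starProjection_apply, Submodule.starProjection_singleton, RCLike.ofReal_pow,
    ← inner_self_eq_norm_sq_to_K]

/-- The valuation induced by a quantum (pure) state is in general not static: on `ℂ³`
there are orthogonal projections `P, Q, P', Q'` and a unit vector `φ` such that the
pure-state valuation `v R = ⟪φ, R φ⟫` satisfies `v P = v P'` and `v Q = v Q'` but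
`v (P ∨ Q) ≠ v (P' ∨ Q')`. -/
theorem pure_state_valuation_not_static :
    ∃ (P Q P' Q' : H3 →L[ℂ] H3) (φ : H3),
      ‖φ‖ = 1 ∧
      IsOrthoProj P ∧ IsOrthoProj Q ∧ IsOrthoProj P' ∧ IsOrthoProj Q' ∧
      ⟪φ, P φ⟫ = ⟪φ, P' φ⟫ ∧
      ⟪φ, Q φ⟫ = ⟪φ, Q' φ⟫ ∧
      ⟪φ, (Pjoin P Q) φ⟫ ≠ ⟪φ, (Pjoin P' Q') φ⟫ := by
  set φ : H3 := EuclideanSpace.single 0 1 with hφ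
  set u : H3 := EuclideanSpace.single 0 1 + EuclideanSpace.single 1 1 with hu
  set w : H3 := EuclideanSpace.single 0 1 - EuclideanSpace.single 1 1 with hw
  have huφ : ⟪u, φ⟫ = 1 := by
    simp [hu, hφ, inner_add_left, EuclideanSpace.inner_single_left,
      EuclideanSpace.single_apply]
  have hφu : ⟪φ, u⟫ = 1 := by
    simp [hu, hφ, inner_add_right, EuclideanSpace.inner_single_left,
      EuclideanSpace.single_apply]
  have hwφ : ⟪w, φ⟫ = 1 := by
    simp [hw, hφ, inner_sub_left, EuclideanSpace.inner_single_left,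
      EuclideanSpace.single_apply]
  have hφw : ⟪φ, w⟫ = 1 := by
    simp [hw, hφ, inner_sub_right, EuclideanSpace.inner_single_left,
      EuclideanSpace.single_apply]
  have huu : ⟪u, u⟫ = 2 := by
    simp [hu, inner_add_left, inner_add_right, EuclideanSpace.inner_single_left, -inner_self_eq_norm_sq_to_K,
      EuclideanSpace.single_apply]
    norm_num
  have hww : ⟪w, w⟫ = 2 := by
    simp [hw, inner_sub_left, inner_sub_right, EuclideanSpace.inner_single_left, -inner_self_eq_norm_sq_to_K,
      EuclideanSpace.single_apply]
    norm_num
  have hφφ : ⟪φ, φ⟫ = 1 := by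
    simp [hφ, EuclideanSpace.inner_single_left, EuclideanSpace.single_apply]
  have val_u : ⟪φ, sproj (ℂ ∙ u) φ⟫ = 1 / 2 := by
    rw [sproj_singleton, inner_smul_right, hφu, huφ, huu]
    norm_num
  have val_w : ⟪φ, sproj (ℂ ∙ w) φ⟫ = 1 / 2 := by
    rw [sproj_singleton, inner_smul_right, hφw, hwφ, hww]
    norm_num
  refine ⟨sproj (ℂ ∙ u), sproj (ℂ ∙ u), sproj (ℂ ∙ u), sproj (ℂ ∙ w), φ, ?_,
    sproj_isOrtho _, sproj_isOrtho _, sproj_isOrtho _, sproj_isOrtho _, rfl,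
    val_u.trans val_w.symm, ?_⟩
  · simp [hφ]
  · have h1 : ⟪φ, (Pjoin (sproj (ℂ ∙ u)) (sproj (ℂ ∙ u))) φ⟫ = 1 / 2 := by
      rw [Pjoin, rng_sproj, sup_idem]
      exact val_u
    have hmem : φ ∈ (ℂ ∙ u) ⊔ (ℂ ∙ w) := by
      have hdecomp : φ = ((1:ℂ)/2) • u + ((1:ℂ)/2) • w := by
        rw [hφ, hu, hw]
        module
      rw [hdecomp]
      exact Submodule.add_mem_sup
        (Submodule.smul_mem _ _ (Submodule.mem_span_singleton_self u))
        (Submodule.smul_mem _ _ (Submodule.mem_span_singleton_self w))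
    have h2 : ⟪φ, (Pjoin (sproj (ℂ ∙ u)) (sproj (ℂ ∙ w))) φ⟫ = 1 := by
      rw [Pjoin, rng_sproj, rng_sproj, sproj_apply_mem _ _ hmem, hφφ]
    rw [h1, h2]
    norm_num
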